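/- Let γ₁,γ₂,ρ₁,ρ₂,β₁,β₂ ∈ (0,1] with γ_i+ρ_i > 1, β_i+γ_i > 1 and β_i+ρ_i > 1 for i = 1,2, and let y,x,z : [0,1]² → ℝ be continuous with 𝒩_{γ₁,γ₂}(y) < ∞, 𝒩_{ρ₁,ρ₂}(x) < ∞ and 𝒩_{β₁,β₂}(z) < ∞. Then for every rectangle [s,s′]×[t,t′] ⊆ [0,1]² each of the following three families of Riemann sums over grid partitions Π converges as |Π| → 0, and the three limits coincide: (a) Σ_{i,j} y(σ_i,τ_j)·(δ₁x)(σ_i,σ_{i+1};τ_j)·(δ₂z)(σ_{i+1};τ_j,τ_{j+1}); (b) Σ_{i,j} y(σ_i,τ_j)·(δ₁x)(σ_i,σ_{i+1};τ_j)·(δ₂z)(σ_i;τ_j,τ_{j+1}); (c) Σ_{i,j} y(σ_i,τ_j)·(δ₂z)(σ_i;τ_j,τ_{j+1})·(δ₁x)(σ_i,σ_{i+1};τ_{j+1}). (The common limit defines the mixed two-dimensional Young integral ∬ y d₁x d₂z.) -/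

import Mathlib

open Set

/-- Rectangular increment `(δf)(s₁,s₂;t₁,t₂)`. -/
def dd (f : ℝ → ℝ → ℝ) (s₁ s₂ t₁ t₂ : ℝ) : ℝ :=
  f s₂ t₂ - f s₁ t₂ - f s₂ t₁ + f s₁ t₁

/-- Increment in the first direction `(δ₁f)(s₁,s₂;t)`. -/
def d1 (f : ℝ → ℝ → ℝ) (s₁ s₂ t : ℝ) : ℝ := f s₂ t - f s₁ t

/-- Increment in the second direction `(δ₂f)(s;t₁,t₂)`. -/
def d2 (f : ℝ → ℝ → ℝ) (s t₁ t₂ : ℝ) : ℝ := f s t₂ - f s t₁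

/-- `σ` is a grid of `[a,b]` with `m` subintervals. -/
def IsGrid (a b : ℝ) (m : ℕ) (σ : ℕ → ℝ) : Prop :=
  σ 0 = a ∧ σ m = b ∧ ∀ i < m, σ i < σ (i + 1)

/-- The mesh of the grid `σ` is at most `η`. -/
def MeshLE (m : ℕ) (σ : ℕ → ℝ) (η : ℝ) : Prop :=
  ∀ i < m, σ (i + 1) - σ i ≤ η

/-- Convergence of two-dimensional Riemann sums with local summand
`F σᵢ σᵢ₊₁ τⱼ τⱼ₊₁` over grid partitions of `[s,s']×[t,t']` to the limit `L`. -/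
def RConv (s s' t t' : ℝ) (F : ℝ → ℝ → ℝ → ℝ → ℝ) (L : ℝ) : Prop :=
  ∀ ε > (0:ℝ), ∃ η > (0:ℝ), ∀ (m n : ℕ) (σ τ : ℕ → ℝ),
    IsGrid s s' m σ → IsGrid t t' n τ → MeshLE m σ η → MeshLE n τ η →
    |(∑ i ∈ Finset.range m, ∑ j ∈ Finset.range n,
        F (σ i) (σ (i + 1)) (τ j) (τ (j + 1))) - L| ≤ ε

/-- `𝒩_{ρ₁,ρ₂}(f) < ∞` on `[0,1]²`. -/
def NFin (ρ₁ ρ₂ : ℝ) (f : ℝ → ℝ → ℝ) : Prop :=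
  ∃ C : ℝ,
    (∀ s₁ s₂ t₁ t₂ : ℝ, s₁ ∈ Icc (0:ℝ) 1 → s₂ ∈ Icc (0:ℝ) 1 →
      t₁ ∈ Icc (0:ℝ) 1 → t₂ ∈ Icc (0:ℝ) 1 →
      |dd f s₁ s₂ t₁ t₂| ≤ C * |s₂ - s₁| ^ ρ₁ * |t₂ - t₁| ^ ρ₂) ∧
    (∀ s₁ s₂ t : ℝ, s₁ ∈ Icc (0:ℝ) 1 → s₂ ∈ Icc (0:ℝ) 1 → t ∈ Icc (0:ℝ) 1 →
      |d1 f s₁ s₂ t| ≤ C * |s₂ - s₁| ^ ρ₁) ∧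
    (∀ s t₁ t₂ : ℝ, s ∈ Icc (0:ℝ) 1 → t₁ ∈ Icc (0:ℝ) 1 → t₂ ∈ Icc (0:ℝ) 1 →
      |d2 f s t₁ t₂| ≤ C * |t₂ - t₁| ^ ρ₂) ∧
    (∀ s t : ℝ, s ∈ Icc (0:ℝ) 1 → t ∈ Icc (0:ℝ) 1 → |f s t| ≤ C)

/-!
The sums (b) are the Riemann sums of the germ `Ξ(a, b; c, d) = y(a, c) δ₁x(a, b; c) δ₂z(a; c, d)`.
Splitting a cell in the first direction changes `Ξ` by `O(|b - a|^θ₁)`, splitting it in the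
second by `O(|d - c|^θ₂)`, and splitting it in both by `O(|b - a|^θ₁ |d - c|^θ₂)`, where
`θ₁ = ρ₁ + min γ₁ β₁ > 1` and `θ₂ = β₂ + min γ₂ ρ₂ > 1`. Young's one-dimensional sewing bound,
applied to each cell of a refinement in one direction and then to the resulting cell defects in
the other, shows that refining a grid changes the sum by `O(|Π|^(θ₁-1) + |Π|^(θ₂-1))`. Passing
through common refinements, the sums (b) are Cauchy as `|Π| → 0`.

Row by row, (a) - (b) is a one-dimensional Young sum `Σⱼ y δ₁x δ₂(δ₁z)` of size
`O(|σᵢ₊₁ - σᵢ|^(ρ₁+β₁))`, so the difference is `O(|Π|^(ρ₁+β₁-1))`. Column by column, (c) - (b) is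
the same sum with the two variables and the roles of `x` and `z` exchanged.
-/

open Filter Topology

/-! ### One-dimensional sewing -/

lemma abs_mul_le_of_le {x y a b : ℝ} (hx : |x| ≤ a) (hy : |y| ≤ b) : |x * y| ≤ a * b :=
  (abs_mul x y).trans_le (mul_le_mul hx hy (abs_nonneg _) ((abs_nonneg _).trans hx))

lemma abs_mul_mul_le_of_le {x y z a b c : ℝ} (hx : |x| ≤ a) (hy : |y| ≤ b) (hz : |z| ≤ c) :
    |x * y * z| ≤ a * b * c :=
  abs_mul_le_of_le (abs_mul_le_of_le hx hy) hz

def gridSum (m : ℕ) (σ : ℕ → ℝ) (G : ℝ → ℝ → ℝ) : ℝ :=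
  ∑ i ∈ Finset.range m, G (σ i) (σ (i + 1))

def defect (G : ℝ → ℝ → ℝ) (a v b : ℝ) : ℝ :=
  G a b - G a v - G v b

noncomputable def youngConst (θ : ℝ) : ℝ :=
  2 ^ θ * ∑' n : ℕ, (n : ℝ) ^ (-θ)

lemma youngConst_nonneg (θ : ℝ) : 0 ≤ youngConst θ :=
  mul_nonneg (by positivity) (tsum_nonneg fun _ => by positivity)

lemma sum_range_rpow_neg_le_tsum {θ : ℝ} (hθ : 1 < θ) (m : ℕ) :
    ∑ p ∈ Finset.range m, (p : ℝ) ^ (-θ) ≤ ∑' p : ℕ, (p : ℝ) ^ (-θ) :=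
  Summable.sum_le_tsum _ (fun _ _ => by positivity) (Real.summable_nat_rpow.2 (by linarith))

namespace IsGrid

variable {a b : ℝ} {m : ℕ} {σ : ℕ → ℝ}

lemma strictMonoOn (h : IsGrid a b m σ) : StrictMonoOn σ (Iic m) :=
  strictMonoOn_Iic_of_lt_succ fun i hi => by simpa using h.2.2 i hi

lemma mem_Icc (h : IsGrid a b m σ) {i : ℕ} (hi : i ≤ m) : σ i ∈ Icc a b := by
  refine ⟨h.1 ▸ h.strictMonoOn.monotoneOn ?_ ?_ (Nat.zero_le i),
    h.2.1 ▸ h.strictMonoOn.monotoneOn ?_ ?_ hi⟩ <;> simp_all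

lemma le (h : IsGrid a b m σ) : a ≤ b :=
  (h.mem_Icc (Nat.zero_le m)).1.trans (h.mem_Icc (Nat.zero_le m)).2

lemma sum_sub (h : IsGrid a b m σ) : ∑ i ∈ Finset.range m, (σ (i + 1) - σ i) = b - a := by
  rw [Finset.sum_range_sub, h.1, h.2.1]

end IsGrid

def removeNode (σ : ℕ → ℝ) (k : ℕ) : ℕ → ℝ := fun i => if i < k then σ i else σ (i + 1)

lemma IsGrid.removeNode {a b : ℝ} {m k : ℕ} {σ : ℕ → ℝ} (h : IsGrid a b (m + 1) σ)
    (hk : 0 < k) (hkm : k ≤ m) : IsGrid a b m (removeNode σ k) := by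
  refine ⟨by simp [_root_.removeNode, hk, h.1], by simp [_root_.removeNode, hkm.not_gt, h.2.1], ?_⟩
  intro i hi
  simp only [_root_.removeNode]
  split_ifs with h₁ h₂ h₂
  · exact h.2.2 i (by omega)
  · exact h.strictMonoOn (Set.mem_Iic.2 (by omega)) (Set.mem_Iic.2 (by omega)) (by omega)
  · omega
  · exact h.2.2 (i + 1) (by omega)

lemma gridSum_removeNode (σ : ℕ → ℝ) (G : ℝ → ℝ → ℝ) {j m : ℕ} (hj : j < m) :
    gridSum (m + 1) σ G
      = gridSum m (removeNode σ (j + 1)) G - defect G (σ j) (σ (j + 1)) (σ (j + 2)) := by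
  obtain ⟨r, rfl⟩ : ∃ r, m = j + 1 + r := ⟨m - (j + 1), by omega⟩
  have hsplit : j + 1 + r + 1 = j + 2 + r := by ring
  simp only [gridSum, hsplit, Finset.sum_range_add, Finset.sum_range_succ, removeNode, defect]
  have hlow : ∑ i ∈ Finset.range j,
      G (if i < j + 1 then σ i else σ (i + 1)) (if i + 1 < j + 1 then σ (i + 1) else σ (i + 1 + 1))
      = ∑ i ∈ Finset.range j, G (σ i) (σ (i + 1)) :=
    Finset.sum_congr rfl fun i hi => by
      rw [Finset.mem_range] at hi
      rw [if_pos (by omega), if_pos (by omega)]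
  have hhigh : ∑ x ∈ Finset.range r,
      G (if j + 1 + x < j + 1 then σ (j + 1 + x) else σ (j + 1 + x + 1))
        (if j + 1 + x + 1 < j + 1 then σ (j + 1 + x + 1) else σ (j + 1 + x + 1 + 1))
      = ∑ x ∈ Finset.range r, G (σ (j + 2 + x)) (σ (j + 2 + x + 1)) :=
    Finset.sum_congr rfl fun x _ => by
      rw [if_neg (by omega), if_neg (by omega)]
      ring_nf
  rw [hlow, hhigh, if_pos (by omega), if_neg (by omega)]
  ring_nf

lemma IsGrid.exists_gap_le {a b : ℝ} {m : ℕ} {σ : ℕ → ℝ} (h : IsGrid a b (m + 1) σ) (hm : 0 < m) :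
    ∃ j < m, σ (j + 2) - σ j ≤ 2 * (b - a) / m := by
  have hsum : ∑ j ∈ Finset.range m, (σ (j + 2) - σ j) = (σ (m + 1) - σ 1) + (σ m - σ 0) := by
    rw [← Finset.sum_range_sub (fun j => σ (j + 1)), ← Finset.sum_range_sub σ,
      ← Finset.sum_add_distrib]
    exact Finset.sum_congr rfl fun j _ => by ring
  have h1 := (h.mem_Icc (i := 1) (by omega)).1
  have hm' := (h.mem_Icc (i := m) (by omega)).2
  obtain ⟨j, hj, hle⟩ := Finset.exists_le_of_sum_le (g := fun _ => 2 * (b - a) / m)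
    (Finset.nonempty_range_iff.2 hm.ne') (by
      rw [hsum, Finset.sum_const, Finset.card_range, nsmul_eq_mul,
        mul_div_cancel₀ _ (by positivity), h.1, h.2.1]
      linarith)
  exact ⟨j, Finset.mem_range.1 hj, hle⟩

lemma defect_self_eq_zero {θ K u : ℝ} (hθ : 0 < θ) {G : ℝ → ℝ → ℝ}
    (hG : |defect G u u u| ≤ K * (u - u) ^ θ) : G u u = 0 := by
  rw [sub_self, Real.zero_rpow hθ.ne', mul_zero, abs_nonpos_iff, defect] at hG
  linarith

/-- Young's argument: some interior node has its two neighbours within `2 (w - u) / (m - 1)` of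
each other; removing it changes the sum by one defect, and induction on `m` sums these. -/
theorem abs_gridSum_sub_le_sum_rpow_neg {θ K u w : ℝ} (hθ : 0 < θ) (hK : 0 ≤ K)
    {G : ℝ → ℝ → ℝ}
    (hG : ∀ a v b, u ≤ a → a ≤ v → v ≤ b → b ≤ w → |defect G a v b| ≤ K * (b - a) ^ θ)
    {m : ℕ} {σ : ℕ → ℝ} (hσ : IsGrid u w m σ) :
    |gridSum m σ G - G u w| ≤ K * (2 * (w - u)) ^ θ * ∑ p ∈ Finset.range m, (p : ℝ) ^ (-θ) := by
  induction m generalizing σ with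
  | zero =>
    obtain rfl : u = w := hσ.1.symm.trans hσ.2.1
    simp [gridSum, defect_self_eq_zero hθ (hG u u u le_rfl le_rfl le_rfl le_rfl)]
  | succ m ih =>
    have huw := hσ.le
    rcases Nat.eq_zero_or_pos m with rfl | hm
    · simp [gridSum, hσ.1, hσ.2.1, Real.zero_rpow (neg_ne_zero.2 hθ.ne')]
    obtain ⟨j, hj, hgap⟩ := hσ.exists_gap_le hm
    have hdef : |defect G (σ j) (σ (j + 1)) (σ (j + 2))|
        ≤ K * (2 * (w - u)) ^ θ * (m : ℝ) ^ (-θ) := by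
      have hm0 : (0 : ℝ) < m := by exact_mod_cast hm
      have hj0 := hσ.mem_Icc (i := j) (by omega)
      have hj2 := hσ.mem_Icc (i := j + 2) (by omega)
      have hmono : ∀ {i k : ℕ}, i ≤ k → k ≤ m + 1 → σ i ≤ σ k := fun hik hk =>
        hσ.strictMonoOn.monotoneOn (Set.mem_Iic.2 (by omega)) (Set.mem_Iic.2 (by omega)) hik
      calc |defect G (σ j) (σ (j + 1)) (σ (j + 2))| ≤ K * (σ (j + 2) - σ j) ^ θ :=
            hG _ _ _ hj0.1 (hmono (by omega) (by omega)) (hmono (by omega) (by omega)) hj2.2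
        _ ≤ K * (2 * (w - u) / m) ^ θ := by
            gcongr
            · linarith [hmono (i := j) (k := j + 2) (by omega) (by omega)]
        _ = K * (2 * (w - u)) ^ θ * (m : ℝ) ^ (-θ) := by
            rw [Real.div_rpow (by linarith) hm0.le, Real.rpow_neg hm0.le, div_eq_mul_inv, mul_assoc]
    rw [gridSum_removeNode σ G hj, Finset.sum_range_succ, mul_add]
    calc |gridSum m (removeNode σ (j + 1)) G - defect G (σ j) (σ (j + 1)) (σ (j + 2)) - G u w|
        ≤ |gridSum m (removeNode σ (j + 1)) G - G u w|
          + |defect G (σ j) (σ (j + 1)) (σ (j + 2))| := by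
          rw [sub_right_comm]; exact abs_sub _ _
      _ ≤ _ := add_le_add (ih (hσ.removeNode (by omega) (by omega))) hdef

theorem abs_gridSum_sub_le {θ K u w : ℝ} (hθ : 1 < θ) (hK : 0 ≤ K) {G : ℝ → ℝ → ℝ}
    (hG : ∀ a v b, u ≤ a → a ≤ v → v ≤ b → b ≤ w → |defect G a v b| ≤ K * (b - a) ^ θ)
    {m : ℕ} {σ : ℕ → ℝ} (hσ : IsGrid u w m σ) :
    |gridSum m σ G - G u w| ≤ youngConst θ * K * (w - u) ^ θ := by
  have huw : 0 ≤ w - u := sub_nonneg.2 hσ.le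
  calc |gridSum m σ G - G u w|
      ≤ K * (2 * (w - u)) ^ θ * ∑ p ∈ Finset.range m, (p : ℝ) ^ (-θ) :=
        abs_gridSum_sub_le_sum_rpow_neg (by linarith) hK hG hσ
    _ ≤ K * (2 * (w - u)) ^ θ * ∑' p : ℕ, (p : ℝ) ^ (-θ) := by
        gcongr; exact sum_range_rpow_neg_le_tsum hθ m
    _ = youngConst θ * K * (w - u) ^ θ := by
        rw [youngConst, Real.mul_rpow zero_le_two huw]; ring

theorem abs_gridSum_mul_sub_le {u w e₁ e₂ A B : ℝ} (he : 1 < e₁ + e₂) (he₁ : 0 ≤ e₁)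
    (he₂ : 0 ≤ e₂) (hA : 0 ≤ A) (hB : 0 ≤ B) {g h : ℝ → ℝ}
    (hg : ∀ c q, u ≤ c → c ≤ q → q ≤ w → |g q - g c| ≤ A * (q - c) ^ e₁)
    (hh : ∀ q d, u ≤ q → q ≤ d → d ≤ w → |h d - h q| ≤ B * (d - q) ^ e₂)
    {n : ℕ} {τ : ℕ → ℝ} (hτ : IsGrid u w n τ) :
    |gridSum n τ (fun c d => g c * (h d - h c)) - g u * (h w - h u)|
      ≤ youngConst (e₁ + e₂) * (A * B) * (w - u) ^ (e₁ + e₂) := by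
  refine abs_gridSum_sub_le he (mul_nonneg hA hB) (fun c q d hc hcq hqd hd => ?_) hτ
  have hdefect : defect (fun c d => g c * (h d - h c)) c q d = -((g q - g c) * (h d - h q)) := by
    simp only [defect]; ring
  rw [hdefect, abs_neg, Real.rpow_add_of_nonneg (by linarith) he₁ he₂]
  calc _ ≤ A * (q - c) ^ e₁ * (B * (d - q) ^ e₂) :=
        abs_mul_le_of_le (hg c q hc hcq (hqd.trans hd)) (hh q d (hc.trans hcq) hqd hd)
    _ ≤ A * (d - c) ^ e₁ * (B * (d - c) ^ e₂) := by
        gcongr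
        all_goals first | linarith | exact mul_nonneg hA (Real.rpow_nonneg (by linarith) _)
    _ = _ := by ring

/-! ### Refinements of grids -/

def Refines (m' : ℕ) (σ' : ℕ → ℝ) (m : ℕ) (σ : ℕ → ℝ) : Prop :=
  ∀ i ≤ m, ∃ k ≤ m', σ' k = σ i

lemma sum_range_eq_sum_blocks (f : ℕ → ℝ) {φ : ℕ → ℕ} (h0 : φ 0 = 0) {n : ℕ}
    (hφ : ∀ i < n, φ i ≤ φ (i + 1)) :
    ∑ k ∈ Finset.range (φ n), f k
      = ∑ i ∈ Finset.range n, ∑ k ∈ Finset.range (φ (i + 1) - φ i), f (φ i + k) := by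
  induction n with
  | zero => simp [h0]
  | succ n ih =>
    rw [Finset.sum_range_succ, ← ih fun i hi => hφ i (by omega), ← Finset.sum_range_add,
      Nat.add_sub_cancel' (hφ n (by omega))]

lemma Refines.exists_index {u w : ℝ} {m m' : ℕ} {σ σ' : ℕ → ℝ} (href : Refines m' σ' m σ)
    (hσ : IsGrid u w m σ) (hσ' : IsGrid u w m' σ') :
    ∃ φ : ℕ → ℕ, φ 0 = 0 ∧ φ m = m' ∧ (∀ i < m, φ i < φ (i + 1)) ∧
      ∀ i ≤ m, φ i ≤ m' ∧ σ' (φ i) = σ i := by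
  choose! φ hφm hφ using href
  have hinj := hσ'.strictMonoOn.injOn
  refine ⟨φ, hinj (hφm 0 (Nat.zero_le m)) (Nat.zero_le m') ?_,
    hinj (hφm m le_rfl) (le_refl m') ?_, fun i hi => ?_, fun i hi => ⟨hφm i hi, hφ i hi⟩⟩
  · rw [hφ 0 (Nat.zero_le m), hσ.1, hσ'.1]
  · rw [hφ m le_rfl, hσ.2.1, hσ'.2.1]
  · rw [← hσ'.strictMonoOn.lt_iff_lt (hφm i hi.le) (hφm (i + 1) hi), hφ i hi.le, hφ (i + 1) hi]
    exact hσ.2.2 i hi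

theorem abs_gridSum_sub_le_of_refines {u w θ M : ℝ} {Φ : ℝ → ℝ → ℝ}
    (hΦ : ∀ a b k ρ, u ≤ a → b ≤ w → IsGrid a b k ρ → |gridSum k ρ Φ - Φ a b| ≤ M * (b - a) ^ θ)
    {m m' : ℕ} {σ σ' : ℕ → ℝ} (hσ : IsGrid u w m σ) (hσ' : IsGrid u w m' σ')
    (href : Refines m' σ' m σ) :
    |gridSum m' σ' Φ - gridSum m σ Φ| ≤ M * ∑ i ∈ Finset.range m, (σ (i + 1) - σ i) ^ θ := by
  obtain ⟨φ, h0, hm, hlt, hφ⟩ := href.exists_index hσ hσ'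
  have hblock : ∀ i < m, IsGrid (σ i) (σ (i + 1)) (φ (i + 1) - φ i) fun k => σ' (φ i + k) :=
    fun i hi => ⟨by simp [(hφ i hi.le).2], by simp [Nat.add_sub_cancel' (hlt i hi).le, (hφ _ hi).2],
      fun k hk => hσ'.2.2 _ (by have := (hφ (i + 1) hi).1; omega)⟩
  have hsplit : gridSum m' σ' Φ - gridSum m σ Φ = ∑ i ∈ Finset.range m,
      (gridSum (φ (i + 1) - φ i) (fun k => σ' (φ i + k)) Φ - Φ (σ i) (σ (i + 1))) := by
    rw [Finset.sum_sub_distrib, gridSum, ← hm,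
      sum_range_eq_sum_blocks _ h0 fun i hi => (hlt i hi).le]
    rfl
  rw [hsplit, Finset.mul_sum]
  refine (Finset.abs_sum_le_sum_abs _ _).trans (Finset.sum_le_sum fun i hi => ?_)
  have hi := Finset.mem_range.1 hi
  exact hΦ _ _ _ _ (hσ.mem_Icc hi.le).1 (hσ.mem_Icc hi).2 (hblock i hi)

lemma IsGrid.sum_rpow_le {u w θ η : ℝ} {m : ℕ} {σ : ℕ → ℝ} (hσ : IsGrid u w m σ)
    (hmesh : MeshLE m σ η) (hθ : 1 ≤ θ) :
    ∑ i ∈ Finset.range m, (σ (i + 1) - σ i) ^ θ ≤ η ^ (θ - 1) * (w - u) := by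
  rw [← hσ.sum_sub, Finset.mul_sum]
  refine Finset.sum_le_sum fun i hi => ?_
  have hi := Finset.mem_range.1 hi
  have hpos : 0 ≤ σ (i + 1) - σ i := sub_nonneg.2 (hσ.2.2 i hi).le
  calc (σ (i + 1) - σ i) ^ θ = (σ (i + 1) - σ i) ^ (θ - 1) * (σ (i + 1) - σ i) := by
        rw [← Real.rpow_add_one' hpos (by linarith), sub_add_cancel]
    _ ≤ η ^ (θ - 1) * (σ (i + 1) - σ i) :=
        mul_le_mul_of_nonneg_right (Real.rpow_le_rpow hpos (hmesh i hi) (by linarith)) hpos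

lemma IsGrid.abs_gridSum_le {u w θ η M : ℝ} {m : ℕ} {σ : ℕ → ℝ} (hσ : IsGrid u w m σ)
    (hmesh : MeshLE m σ η) (hθ : 1 ≤ θ) (hM : 0 ≤ M) {Φ : ℝ → ℝ → ℝ}
    (hΦ : ∀ a b, u ≤ a → a ≤ b → b ≤ w → |Φ a b| ≤ M * (b - a) ^ θ) :
    |gridSum m σ Φ| ≤ M * (η ^ (θ - 1) * (w - u)) := by
  calc |gridSum m σ Φ| ≤ ∑ i ∈ Finset.range m, |Φ (σ i) (σ (i + 1))| :=
        Finset.abs_sum_le_sum_abs _ _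
    _ ≤ ∑ i ∈ Finset.range m, M * (σ (i + 1) - σ i) ^ θ :=
        Finset.sum_le_sum fun i hi => by
          have hi := Finset.mem_range.1 hi
          exact hΦ _ _ (hσ.mem_Icc hi.le).1 (hσ.2.2 i hi).le (hσ.mem_Icc hi).2
    _ ≤ M * (η ^ (θ - 1) * (w - u)) := by
        rw [← Finset.mul_sum]; exact mul_le_mul_of_nonneg_left (hσ.sum_rpow_le hmesh hθ) hM

lemma exists_isGrid_of_finset {u w : ℝ} (T : Finset ℝ) (hu : u ∈ T) (hw : w ∈ T)
    (hT : ∀ x ∈ T, x ∈ Icc u w) :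
    ∃ M μ, IsGrid u w M μ ∧ ∀ x ∈ T, ∃ k ≤ M, μ k = x := by
  have hk : 0 < T.card := Finset.card_pos.2 ⟨u, hu⟩
  set e := T.orderEmbOfFin rfl with he
  set μ : ℕ → ℝ := fun i => e ⟨min i (T.card - 1), by omega⟩
  refine ⟨T.card - 1, μ, ⟨?_, ?_, fun i hi => e.strictMono ?_⟩, fun x hx => ?_⟩
  · simp only [μ, Nat.zero_min, he, Finset.orderEmbOfFin_zero _ hk]
    exact le_antisymm (Finset.min'_le T u hu) (Finset.le_min' _ _ _ fun x hx => (hT x hx).1)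
  · simp only [μ, min_self, he, Finset.orderEmbOfFin_last _ hk]
    exact le_antisymm (Finset.max'_le _ _ _ fun x hx => (hT x hx).2) (Finset.le_max' T w hw)
  · rw [Fin.mk_lt_mk]; omega
  · obtain ⟨j, rfl⟩ : x ∈ Set.range e := by rw [Finset.range_orderEmbOfFin]; exact hx
    exact ⟨j, by omega, by simp [μ, min_eq_left (by omega : (j : ℕ) ≤ T.card - 1)]⟩

lemma IsGrid.exists_common_refinement {u w : ℝ} {m p : ℕ} {σ ρ : ℕ → ℝ}
    (hσ : IsGrid u w m σ) (hρ : IsGrid u w p ρ) :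
    ∃ M μ, IsGrid u w M μ ∧ Refines M μ m σ ∧ Refines M μ p ρ := by
  set T := (Finset.range (m + 1)).image σ ∪ (Finset.range (p + 1)).image ρ
  have hσT : ∀ i ≤ m, σ i ∈ T := fun i hi =>
    Finset.mem_union_left _ (Finset.mem_image_of_mem σ (Finset.mem_range.2 (by omega)))
  have hρT : ∀ i ≤ p, ρ i ∈ T := fun i hi =>
    Finset.mem_union_right _ (Finset.mem_image_of_mem ρ (Finset.mem_range.2 (by omega)))
  obtain ⟨M, μ, hμ, hT⟩ := exists_isGrid_of_finset T (hσ.1 ▸ hσT 0 (Nat.zero_le m))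
    (hσ.2.1 ▸ hσT m le_rfl) (by
      simp only [T, Finset.mem_union, Finset.mem_image, Finset.mem_range]
      rintro x (⟨i, hi, rfl⟩ | ⟨i, hi, rfl⟩)
      exacts [hσ.mem_Icc (by omega), hρ.mem_Icc (by omega)])
  exact ⟨M, μ, hμ, fun i hi => hT _ (hσT i hi), fun i hi => hT _ (hρT i hi)⟩

lemma exists_isGrid_meshLE {a b η : ℝ} (hab : a ≤ b) (hη : 0 < η) :
    ∃ m σ, IsGrid a b m σ ∧ MeshLE m σ η := by
  rcases hab.eq_or_lt with rfl | hab
  · exact ⟨0, fun _ => a, ⟨rfl, rfl, by simp⟩, by simp [MeshLE]⟩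
  set m := ⌈(b - a) / η⌉₊
  have hm : (0 : ℝ) < m := Nat.cast_pos.2 (Nat.ceil_pos.2 (div_pos (by linarith) hη))
  have hstep : (b - a) / m ≤ η := by
    rw [div_le_iff₀ hm, mul_comm, ← div_le_iff₀ hη]; exact Nat.le_ceil _
  refine ⟨m, fun i => a + i * ((b - a) / m), ⟨by simp, by field_simp; ring, fun i _ => ?_⟩,
    fun i _ => ?_⟩
  · push_cast; linarith [div_pos (sub_pos.2 hab) hm]
  · push_cast; linarith

/-! ### Two-dimensional sewing -/

def gridSum₂ (m n : ℕ) (σ τ : ℕ → ℝ) (Ξ : ℝ → ℝ → ℝ → ℝ → ℝ) : ℝ :=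
  gridSum m σ fun a b => gridSum n τ (Ξ a b)

lemma gridSum₂_swap (m n : ℕ) (σ τ : ℕ → ℝ) (Ξ : ℝ → ℝ → ℝ → ℝ → ℝ) :
    gridSum₂ m n σ τ Ξ = gridSum₂ n m τ σ fun c d a b => Ξ a b c d := by
  simp only [gridSum₂, gridSum]; exact Finset.sum_comm

structure SewingBounds (θ₁ θ₂ K s s' t t' : ℝ) (Ξ : ℝ → ℝ → ℝ → ℝ → ℝ) : Prop where
  fst : ∀ a p b c d, s ≤ a → a ≤ p → p ≤ b → b ≤ s' → t ≤ c → c ≤ d → d ≤ t' →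
    |defect (fun a b => Ξ a b c d) a p b| ≤ K * (b - a) ^ θ₁
  snd : ∀ a b c q d, s ≤ a → a ≤ b → b ≤ s' → t ≤ c → c ≤ q → q ≤ d → d ≤ t' →
    |defect (Ξ a b) c q d| ≤ K * (d - c) ^ θ₂
  mixed : ∀ a p b c q d, s ≤ a → a ≤ p → p ≤ b → b ≤ s' → t ≤ c → c ≤ q → q ≤ d → d ≤ t' →
    |defect (fun a b => defect (Ξ a b) c q d) a p b| ≤ K * (b - a) ^ θ₁ * (d - c) ^ θ₂

noncomputable def sewConst (θ₁ θ₂ K ℓ₁ ℓ₂ : ℝ) : ℝ :=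
  youngConst θ₁ * K * (1 + youngConst θ₂ * ℓ₂ ^ θ₂) * ℓ₁

noncomputable def sewRate (θ₁ θ₂ K ℓ₁ ℓ₂ η : ℝ) : ℝ :=
  sewConst θ₁ θ₂ K ℓ₁ ℓ₂ * η ^ (θ₁ - 1) + sewConst θ₂ θ₁ K ℓ₂ ℓ₁ * η ^ (θ₂ - 1)

namespace SewingBounds

variable {θ₁ θ₂ K s s' t t' : ℝ} {Ξ : ℝ → ℝ → ℝ → ℝ → ℝ}

lemma swap (h : SewingBounds θ₁ θ₂ K s s' t t' Ξ) :
    SewingBounds θ₂ θ₁ K t t' s s' fun c d a b => Ξ a b c d where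
  fst c q d a b hc hcq hqd hd ha hab hb := h.snd a b c q d ha hab hb hc hcq hqd hd
  snd c d a p b hc hcd hd ha hap hpb hb := h.fst a p b c d ha hap hpb hb hc hcd hd
  mixed c q d a p b hc hcq hqd hd ha hap hpb hb := by
    have := h.mixed a p b c q d ha hap hpb hb hc hcq hqd hd
    simp only [defect] at this ⊢
    convert this using 1
    · congr 1; ring
    · ring

lemma mono {s₀ s₀' t₀ t₀' : ℝ} (h : SewingBounds θ₁ θ₂ K s₀ s₀' t₀ t₀' Ξ) (hs : s₀ ≤ s)
    (hs' : s' ≤ s₀') (ht : t₀ ≤ t) (ht' : t' ≤ t₀') : SewingBounds θ₁ θ₂ K s s' t t' Ξ where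
  fst a p b c d ha hap hpb hb hc hcd hd :=
    h.fst a p b c d (hs.trans ha) hap hpb (hb.trans hs') (ht.trans hc) hcd (hd.trans ht')
  snd a b c q d ha hab hb hc hcq hqd hd :=
    h.snd a b c q d (hs.trans ha) hab (hb.trans hs') (ht.trans hc) hcq hqd (hd.trans ht')
  mixed a p b c q d ha hap hpb hb hc hcq hqd hd :=
    h.mixed a p b c q d (hs.trans ha) hap hpb (hb.trans hs') (ht.trans hc) hcq hqd (hd.trans ht')

variable (hθ₁ : 1 < θ₁) (hθ₂ : 1 < θ₂) (hK : 0 ≤ K)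
include hθ₁ hθ₂ hK

/-- Subdividing `[a, b]` by `ρ` changes each cell germ `Ξ a b c d` by some `E c d`, bounded by
`fst`; the defect of `E` is the subdivided mixed defect, so sewing `E` along `τ` bounds the sum. -/
lemma abs_gridSum_gridSum_sub_le (h : SewingBounds θ₁ θ₂ K s s' t t' Ξ) {a b : ℝ}
    (ha : s ≤ a) (hb : b ≤ s') {k : ℕ} {ρ : ℕ → ℝ} (hρ : IsGrid a b k ρ) {n : ℕ} {τ : ℕ → ℝ}
    (hτ : IsGrid t t' n τ) :
    |gridSum k ρ (fun a b => gridSum n τ (Ξ a b)) - gridSum n τ (Ξ a b)|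
      ≤ youngConst θ₁ * K * (1 + youngConst θ₂ * (t' - t) ^ θ₂) * (b - a) ^ θ₁ := by
  set E : ℝ → ℝ → ℝ := fun c d => gridSum k ρ (fun a b => Ξ a b c d) - Ξ a b c d
  have hsum : gridSum k ρ (fun a b => gridSum n τ (Ξ a b)) - gridSum n τ (Ξ a b)
      = gridSum n τ E := by
    simp only [gridSum, E, Finset.sum_sub_distrib]
    rw [Finset.sum_comm]
  have hab : 0 ≤ b - a := sub_nonneg.2 hρ.le
  have hY₁ := youngConst_nonneg θ₁
  have hE : ∀ c d, t ≤ c → c ≤ d → d ≤ t' → |E c d| ≤ youngConst θ₁ * K * (b - a) ^ θ₁ :=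
    fun c d hc hcd hd => abs_gridSum_sub_le hθ₁ hK
      (fun a' p b' ha' hap hpb hb' => h.fst a' p b' c d (ha.trans ha') hap hpb (hb'.trans hb)
        hc hcd hd) hρ
  have hdefect : ∀ c q d, t ≤ c → c ≤ q → q ≤ d → d ≤ t' →
      |defect E c q d| ≤ youngConst θ₁ * K * (b - a) ^ θ₁ * (d - c) ^ θ₂ := by
    intro c q d hc hcq hqd hd
    have hlin : defect E c q d
        = gridSum k ρ (fun a b => defect (Ξ a b) c q d) - defect (Ξ a b) c q d := by
      simp only [E, defect, gridSum, Finset.sum_sub_distrib]; ring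
    have hKd : 0 ≤ K * (d - c) ^ θ₂ := mul_nonneg hK (Real.rpow_nonneg (by linarith) _)
    rw [hlin]
    calc _ ≤ youngConst θ₁ * (K * (d - c) ^ θ₂) * (b - a) ^ θ₁ :=
          abs_gridSum_sub_le hθ₁ hKd (fun a' p b' ha' hap hpb hb' => by
            rw [mul_right_comm]
            exact h.mixed a' p b' c q d (ha.trans ha') hap hpb (hb'.trans hb) hc hcq hqd hd) hρ
      _ = _ := by ring
  have hM : 0 ≤ youngConst θ₁ * K * (b - a) ^ θ₁ := by positivity
  rw [hsum]
  calc |gridSum n τ E|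
      ≤ |E t t'| + |gridSum n τ E - E t t'| := by
        simpa using abs_add_le (E t t') (gridSum n τ E - E t t')
    _ ≤ youngConst θ₁ * K * (b - a) ^ θ₁
          + youngConst θ₂ * (youngConst θ₁ * K * (b - a) ^ θ₁) * (t' - t) ^ θ₂ :=
        add_le_add (hE t t' le_rfl hτ.le le_rfl) (abs_gridSum_sub_le hθ₂ hM hdefect hτ)
    _ = _ := by ring

lemma abs_gridSum₂_sub_le_of_refines_fst (h : SewingBounds θ₁ θ₂ K s s' t t' Ξ) {m m' n : ℕ}
    {σ σ' τ : ℕ → ℝ} {η : ℝ} (hσ : IsGrid s s' m σ) (hσ' : IsGrid s s' m' σ')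
    (href : Refines m' σ' m σ) (hmesh : MeshLE m σ η) (hτ : IsGrid t t' n τ) :
    |gridSum₂ m' n σ' τ Ξ - gridSum₂ m n σ τ Ξ|
      ≤ sewConst θ₁ θ₂ K (s' - s) (t' - t) * η ^ (θ₁ - 1) := by
  have hM : 0 ≤ youngConst θ₁ * K * (1 + youngConst θ₂ * (t' - t) ^ θ₂) := by
    have := youngConst_nonneg θ₁; have := youngConst_nonneg θ₂
    have := Real.rpow_nonneg (sub_nonneg.2 hτ.le) θ₂
    positivity
  calc |gridSum₂ m' n σ' τ Ξ - gridSum₂ m n σ τ Ξ|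
      ≤ youngConst θ₁ * K * (1 + youngConst θ₂ * (t' - t) ^ θ₂)
          * ∑ i ∈ Finset.range m, (σ (i + 1) - σ i) ^ θ₁ :=
        abs_gridSum_sub_le_of_refines (fun a b k ρ ha hb hρ =>
          h.abs_gridSum_gridSum_sub_le hθ₁ hθ₂ hK ha hb hρ hτ) hσ hσ' href
    _ ≤ youngConst θ₁ * K * (1 + youngConst θ₂ * (t' - t) ^ θ₂) * (η ^ (θ₁ - 1) * (s' - s)) :=
        mul_le_mul_of_nonneg_left (hσ.sum_rpow_le hmesh hθ₁.le) hM
    _ = _ := by rw [sewConst]; ring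

lemma abs_gridSum₂_sub_le_of_refines (h : SewingBounds θ₁ θ₂ K s s' t t' Ξ) {m m' n n' : ℕ}
    {σ σ' τ τ' : ℕ → ℝ} {η : ℝ} (hσ : IsGrid s s' m σ) (hσ' : IsGrid s s' m' σ')
    (hτ : IsGrid t t' n τ) (hτ' : IsGrid t t' n' τ') (hrefσ : Refines m' σ' m σ)
    (hrefτ : Refines n' τ' n τ) (hmσ : MeshLE m σ η) (hmτ : MeshLE n τ η) :
    |gridSum₂ m' n' σ' τ' Ξ - gridSum₂ m n σ τ Ξ| ≤ sewRate θ₁ θ₂ K (s' - s) (t' - t) η := by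
  have hsnd : |gridSum₂ m' n' σ' τ' Ξ - gridSum₂ m' n σ' τ Ξ|
      ≤ sewConst θ₂ θ₁ K (t' - t) (s' - s) * η ^ (θ₂ - 1) := by
    rw [gridSum₂_swap, gridSum₂_swap m']
    exact h.swap.abs_gridSum₂_sub_le_of_refines_fst hθ₂ hθ₁ hK hτ hτ' hrefτ hmτ hσ'
  have hfst := h.abs_gridSum₂_sub_le_of_refines_fst hθ₁ hθ₂ hK hσ hσ' hrefσ hmσ hτ
  calc _ ≤ |gridSum₂ m' n' σ' τ' Ξ - gridSum₂ m' n σ' τ Ξ|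
        + |gridSum₂ m' n σ' τ Ξ - gridSum₂ m n σ τ Ξ| := abs_sub_le _ _ _
    _ ≤ _ := by rw [sewRate]; linarith

end SewingBounds

lemma MeshLE.mono {m : ℕ} {σ : ℕ → ℝ} {η η' : ℝ} (h : MeshLE m σ η) (hη : η ≤ η') :
    MeshLE m σ η' :=
  fun i hi => (h i hi).trans hη

lemma tendsto_const_mul_rpow_nhdsGT_zero (A : ℝ) {e : ℝ} (he : 0 < e) :
    Tendsto (fun η : ℝ => A * η ^ e) (𝓝[>] 0) (𝓝 0) := by
  have := ((continuousAt_id (x := (0 : ℝ)).rpow_const (Or.inr he.le)).const_mul A).tendsto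
  rw [id, Real.zero_rpow he.ne', mul_zero] at this
  exact this.mono_left nhdsWithin_le_nhds

def RConvRate (s s' t t' : ℝ) (F : ℝ → ℝ → ℝ → ℝ → ℝ) (L : ℝ) (r : ℝ → ℝ) : Prop :=
  ∀ η > 0, ∀ m n σ τ, IsGrid s s' m σ → IsGrid t t' n τ → MeshLE m σ η → MeshLE n τ η →
    |gridSum₂ m n σ τ F - L| ≤ r η

section RConvRate

variable {s s' t t' L : ℝ} {F G : ℝ → ℝ → ℝ → ℝ → ℝ} {r r' : ℝ → ℝ}

lemma RConvRate.rconv (h : RConvRate s s' t t' F L r) (hr : Tendsto r (𝓝[>] 0) (𝓝 0)) :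
    RConv s s' t t' F L := by
  intro ε hε
  obtain ⟨η, hrη, hη⟩ := ((hr.eventually (ge_mem_nhds hε)).and self_mem_nhdsWithin).exists
  exact ⟨η, hη, fun m n σ τ hσ hτ hmσ hmτ => (h η hη m n σ τ hσ hτ hmσ hmτ).trans hrη⟩

lemma gridSum₂_sub (m n : ℕ) (σ τ : ℕ → ℝ) (F G : ℝ → ℝ → ℝ → ℝ → ℝ) :
    gridSum₂ m n σ τ (fun a b c d => G a b c d - F a b c d)
      = gridSum₂ m n σ τ G - gridSum₂ m n σ τ F := by
  simp only [gridSum₂, gridSum, Finset.sum_sub_distrib]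

lemma RConvRate.of_sub (h : RConvRate s s' t t' F L r)
    (hd : RConvRate s s' t t' (fun a b c d => G a b c d - F a b c d) 0 r') :
    RConvRate s s' t t' G L (r + r') := by
  intro η hη m n σ τ hσ hτ hmσ hmτ
  have h₁ := h η hη m n σ τ hσ hτ hmσ hmτ
  have h₂ := hd η hη m n σ τ hσ hτ hmσ hmτ
  rw [gridSum₂_sub, sub_zero] at h₂
  calc |gridSum₂ m n σ τ G - L|
      ≤ |gridSum₂ m n σ τ F - L| + |gridSum₂ m n σ τ G - gridSum₂ m n σ τ F| := by
        simpa using abs_add_le (gridSum₂ m n σ τ F - L) (gridSum₂ m n σ τ G - gridSum₂ m n σ τ F)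
    _ ≤ r η + r' η := add_le_add h₁ h₂

lemma RConvRate.rconv_of_sub (h : RConvRate s s' t t' F L r) (hr : Tendsto r (𝓝[>] 0) (𝓝 0))
    (hd : RConvRate s s' t t' (fun a b c d => G a b c d - F a b c d) 0 r')
    (hr' : Tendsto r' (𝓝[>] 0) (𝓝 0)) : RConv s s' t t' G L :=
  (h.of_sub hd).rconv <| by
    have := hr.add hr'
    rwa [add_zero] at this

lemma RConvRate.of_swap (h : RConvRate t t' s s' (fun c d a b => F a b c d) L r) :
    RConvRate s s' t t' F L r :=
  fun η hη m n σ τ hσ hτ hmσ hmτ => by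
    rw [gridSum₂_swap]; exact h η hη n m τ σ hτ hσ hmτ hmσ

theorem exists_rconvRate_of_cauchy (hs : s ≤ s') (ht : t ≤ t') (hr : Tendsto r (𝓝[>] 0) (𝓝 0))
    (hF : ∀ η > 0, ∀ m n σ τ m' n' σ' τ', IsGrid s s' m σ → IsGrid t t' n τ → MeshLE m σ η →
      MeshLE n τ η → IsGrid s s' m' σ' → IsGrid t t' n' τ' → MeshLE m' σ' η → MeshLE n' τ' η →
      |gridSum₂ m n σ τ F - gridSum₂ m' n' σ' τ' F| ≤ r η) :
    ∃ L, RConvRate s s' t t' F L r := by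
  have hη (k : ℕ) : (0 : ℝ) < 1 / (k + 1) := Nat.one_div_pos_of_nat
  have hanti {k l : ℕ} (h : l ≤ k) : (1 : ℝ) / (k + 1) ≤ 1 / (l + 1) := Nat.one_div_le_one_div h
  choose m σ hσ hmσ using fun k => exists_isGrid_meshLE hs (hη k)
  choose n τ hτ hmτ using fun k => exists_isGrid_meshLE ht (hη k)
  set S : ℕ → ℝ := fun k => gridSum₂ (m k) (n k) (σ k) (τ k) F
  have hcauchy : CauchySeq S := by
    refine cauchySeq_of_le_tendsto_0 (fun N : ℕ => r (1 / (N + 1))) (fun k l N hk hl => ?_)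
      (hr.comp (tendsto_nhdsWithin_iff.2
        ⟨tendsto_one_div_add_atTop_nhds_zero_nat, Eventually.of_forall hη⟩))
    exact hF _ (hη N) _ _ _ _ _ _ _ _ (hσ k) (hτ k) ((hmσ k).mono (hanti hk))
      ((hmτ k).mono (hanti hk)) (hσ l) (hτ l) ((hmσ l).mono (hanti hl)) ((hmτ l).mono (hanti hl))
  obtain ⟨L, hL⟩ := cauchySeq_tendsto_of_complete hcauchy
  refine ⟨L, fun η hη' m' n' σ' τ' hσ' hτ' hmσ' hmτ' => ?_⟩
  obtain ⟨N, hN⟩ := exists_nat_one_div_lt hη'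
  refine le_of_tendsto ((tendsto_const_nhds.sub hL).abs) (eventually_atTop.2 ⟨N, fun k hk => ?_⟩)
  have hk : (1 : ℝ) / (k + 1) ≤ η := (hanti hk).trans hN.le
  exact hF η hη' _ _ _ _ _ _ _ _ hσ' hτ' hmσ' hmτ' (hσ k) (hτ k) ((hmσ k).mono hk)
    ((hmτ k).mono hk)

end RConvRate

lemma tendsto_sewRate {θ₁ θ₂ : ℝ} (hθ₁ : 1 < θ₁) (hθ₂ : 1 < θ₂) (K ℓ₁ ℓ₂ : ℝ) :
    Tendsto (sewRate θ₁ θ₂ K ℓ₁ ℓ₂) (𝓝[>] 0) (𝓝 0) := by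
  have := (tendsto_const_mul_rpow_nhdsGT_zero (sewConst θ₁ θ₂ K ℓ₁ ℓ₂) (sub_pos.2 hθ₁)).add
    (tendsto_const_mul_rpow_nhdsGT_zero (sewConst θ₂ θ₁ K ℓ₂ ℓ₁) (sub_pos.2 hθ₂))
  rwa [add_zero] at this

theorem SewingBounds.exists_rconvRate {θ₁ θ₂ K s s' t t' : ℝ} {Ξ : ℝ → ℝ → ℝ → ℝ → ℝ}
    (h : SewingBounds θ₁ θ₂ K s s' t t' Ξ) (hθ₁ : 1 < θ₁) (hθ₂ : 1 < θ₂) (hK : 0 ≤ K)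
    (hs : s ≤ s') (ht : t ≤ t') :
    ∃ L, ∃ r : ℝ → ℝ, Tendsto r (𝓝[>] 0) (𝓝 0) ∧ RConvRate s s' t t' Ξ L r := by
  obtain ⟨L, hL⟩ := exists_rconvRate_of_cauchy (F := Ξ) hs ht
    (by simpa using (tendsto_sewRate hθ₁ hθ₂ K (s' - s) (t' - t)).const_mul 2)
    fun η _ m n σ τ m' n' σ' τ' hσ hτ hmσ hmτ hσ' hτ' hmσ' hmτ' => by
      obtain ⟨M, μ, hμ, hμσ, hμσ'⟩ := hσ.exists_common_refinement hσ'
      obtain ⟨N, ν, hν, hντ, hντ'⟩ := hτ.exists_common_refinement hτ'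
      have h₁ := h.abs_gridSum₂_sub_le_of_refines hθ₁ hθ₂ hK hσ hμ hτ hν hμσ hντ hmσ hmτ
      have h₂ := h.abs_gridSum₂_sub_le_of_refines hθ₁ hθ₂ hK hσ' hμ hτ' hν hμσ' hντ' hmσ' hmτ'
      rw [abs_sub_comm] at h₁
      linarith [abs_sub_le (gridSum₂ m n σ τ Ξ) (gridSum₂ M N μ ν Ξ) (gridSum₂ m' n' σ' τ' Ξ)]
  exact ⟨L, _, by simpa using (tendsto_sewRate hθ₁ hθ₂ K (s' - s) (t' - t)).const_mul 2, hL⟩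

/-! ### Hölder bounds and the Young germ -/

lemma abs_sub_rpow_le_abs_sub_rpow {a b e e' : ℝ} (ha : a ∈ Icc (0 : ℝ) 1)
    (hb : b ∈ Icc (0 : ℝ) 1) (he' : 0 ≤ e') (hee' : e' ≤ e) : |b - a| ^ e ≤ |b - a| ^ e' :=
  Real.rpow_le_rpow_of_exponent_ge' (abs_nonneg _)
    (abs_sub_le_of_le_of_le hb.1 hb.2 ha.1 ha.2 |>.trans_eq (sub_zero 1)) he' hee'

-- `NFin ρ₁ ρ₂ f` unfolds to `∃ C, HolderBound ρ₁ ρ₂ C f`.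
def HolderBound (ρ₁ ρ₂ C : ℝ) (f : ℝ → ℝ → ℝ) : Prop :=
  (∀ s₁ s₂ t₁ t₂ : ℝ, s₁ ∈ Icc (0:ℝ) 1 → s₂ ∈ Icc (0:ℝ) 1 →
    t₁ ∈ Icc (0:ℝ) 1 → t₂ ∈ Icc (0:ℝ) 1 →
    |dd f s₁ s₂ t₁ t₂| ≤ C * |s₂ - s₁| ^ ρ₁ * |t₂ - t₁| ^ ρ₂) ∧
  (∀ s₁ s₂ t : ℝ, s₁ ∈ Icc (0:ℝ) 1 → s₂ ∈ Icc (0:ℝ) 1 → t ∈ Icc (0:ℝ) 1 →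
    |d1 f s₁ s₂ t| ≤ C * |s₂ - s₁| ^ ρ₁) ∧
  (∀ s t₁ t₂ : ℝ, s ∈ Icc (0:ℝ) 1 → t₁ ∈ Icc (0:ℝ) 1 → t₂ ∈ Icc (0:ℝ) 1 →
    |d2 f s t₁ t₂| ≤ C * |t₂ - t₁| ^ ρ₂) ∧
  (∀ s t : ℝ, s ∈ Icc (0:ℝ) 1 → t ∈ Icc (0:ℝ) 1 → |f s t| ≤ C)

namespace HolderBound

variable {ρ₁ ρ₂ C : ℝ} {f : ℝ → ℝ → ℝ}

lemma nonneg (h : HolderBound ρ₁ ρ₂ C f) : 0 ≤ C :=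
  (abs_nonneg _).trans (h.2.2.2 0 0 (left_mem_Icc.2 zero_le_one) (left_mem_Icc.2 zero_le_one))

lemma swap (h : HolderBound ρ₁ ρ₂ C f) : HolderBound ρ₂ ρ₁ C (Function.swap f) := by
  refine ⟨fun t₁ t₂ s₁ s₂ ht₁ ht₂ hs₁ hs₂ => ?_,
    fun t₁ t₂ s ht₁ ht₂ hs => h.2.2.1 s t₁ t₂ hs ht₁ ht₂,
    fun t s₁ s₂ ht hs₁ hs₂ => h.2.1 s₁ s₂ t hs₁ hs₂ ht, fun t s ht hs => h.2.2.2 s t hs ht⟩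
  have hdd : dd (Function.swap f) t₁ t₂ s₁ s₂ = dd f s₁ s₂ t₁ t₂ := by
    simp only [dd, Function.swap]; ring
  rw [hdd, mul_right_comm]
  exact h.1 s₁ s₂ t₁ t₂ hs₁ hs₂ ht₁ ht₂

lemma mono_const {C' : ℝ} (h : HolderBound ρ₁ ρ₂ C f) (hC : C ≤ C') : HolderBound ρ₁ ρ₂ C' f := by
  refine ⟨fun s₁ s₂ t₁ t₂ hs₁ hs₂ ht₁ ht₂ => (h.1 s₁ s₂ t₁ t₂ hs₁ hs₂ ht₁ ht₂).trans ?_,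
    fun s₁ s₂ t hs₁ hs₂ ht => (h.2.1 s₁ s₂ t hs₁ hs₂ ht).trans ?_,
    fun s t₁ t₂ hs ht₁ ht₂ => (h.2.2.1 s t₁ t₂ hs ht₁ ht₂).trans ?_,
    fun s t hs ht => (h.2.2.2 s t hs ht).trans hC⟩ <;> gcongr

lemma weaken_exponent {ρ₁' ρ₂' : ℝ} (h : HolderBound ρ₁ ρ₂ C f) (hρ₁ : ρ₁' ∈ Icc 0 ρ₁)
    (hρ₂ : ρ₂' ∈ Icc 0 ρ₂) : HolderBound ρ₁' ρ₂' C f := by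
  have hC := h.nonneg
  refine ⟨fun s₁ s₂ t₁ t₂ hs₁ hs₂ ht₁ ht₂ => (h.1 s₁ s₂ t₁ t₂ hs₁ hs₂ ht₁ ht₂).trans ?_,
    fun s₁ s₂ t hs₁ hs₂ ht => (h.2.1 s₁ s₂ t hs₁ hs₂ ht).trans ?_,
    fun s t₁ t₂ hs ht₁ ht₂ => (h.2.2.1 s t₁ t₂ hs ht₁ ht₂).trans ?_, h.2.2.2⟩
  · exact mul_le_mul
      (mul_le_mul_of_nonneg_left (abs_sub_rpow_le_abs_sub_rpow hs₁ hs₂ hρ₁.1 hρ₁.2) hC)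
      (abs_sub_rpow_le_abs_sub_rpow ht₁ ht₂ hρ₂.1 hρ₂.2) (by positivity) (by positivity)
  · exact mul_le_mul_of_nonneg_left (abs_sub_rpow_le_abs_sub_rpow hs₁ hs₂ hρ₁.1 hρ₁.2) hC
  · exact mul_le_mul_of_nonneg_left (abs_sub_rpow_le_abs_sub_rpow ht₁ ht₂ hρ₂.1 hρ₂.2) hC

lemma abs_le (h : HolderBound ρ₁ ρ₂ C f) {s t : ℝ} (hs : s ∈ Icc (0 : ℝ) 1)
    (ht : t ∈ Icc (0 : ℝ) 1) : |f s t| ≤ C :=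
  h.2.2.2 s t hs ht

lemma abs_d1_le (h : HolderBound ρ₁ ρ₂ C f) (hρ₁ : 0 ≤ ρ₁) {a b s₁ s₂ t : ℝ} (ha : 0 ≤ a)
    (hb : b ≤ 1) (hs₁ : s₁ ∈ Icc a b) (hs₂ : s₂ ∈ Icc a b) (ht : t ∈ Icc (0 : ℝ) 1) :
    |d1 f s₁ s₂ t| ≤ C * (b - a) ^ ρ₁ :=
  (h.2.1 s₁ s₂ t ⟨ha.trans hs₁.1, hs₁.2.trans hb⟩ ⟨ha.trans hs₂.1, hs₂.2.trans hb⟩ ht).trans <|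
    mul_le_mul_of_nonneg_left (Real.rpow_le_rpow (abs_nonneg _)
      (abs_sub_le_of_le_of_le hs₂.1 hs₂.2 hs₁.1 hs₁.2) hρ₁) h.nonneg

lemma abs_d2_le (h : HolderBound ρ₁ ρ₂ C f) (hρ₂ : 0 ≤ ρ₂) {c d s t₁ t₂ : ℝ} (hc : 0 ≤ c)
    (hd : d ≤ 1) (hs : s ∈ Icc (0 : ℝ) 1) (ht₁ : t₁ ∈ Icc c d) (ht₂ : t₂ ∈ Icc c d) :
    |d2 f s t₁ t₂| ≤ C * (d - c) ^ ρ₂ :=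
  h.swap.abs_d1_le hρ₂ hc hd ht₁ ht₂ hs

lemma abs_dd_le (h : HolderBound ρ₁ ρ₂ C f) (hρ₁ : 0 ≤ ρ₁) (hρ₂ : 0 ≤ ρ₂)
    {a b c d s₁ s₂ t₁ t₂ : ℝ} (ha : 0 ≤ a) (hb : b ≤ 1) (hc : 0 ≤ c) (hd : d ≤ 1)
    (hs₁ : s₁ ∈ Icc a b) (hs₂ : s₂ ∈ Icc a b) (ht₁ : t₁ ∈ Icc c d) (ht₂ : t₂ ∈ Icc c d) :
    |dd f s₁ s₂ t₁ t₂| ≤ C * (b - a) ^ ρ₁ * (d - c) ^ ρ₂ :=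
  (h.1 s₁ s₂ t₁ t₂ ⟨ha.trans hs₁.1, hs₁.2.trans hb⟩ ⟨ha.trans hs₂.1, hs₂.2.trans hb⟩
    ⟨hc.trans ht₁.1, ht₁.2.trans hd⟩ ⟨hc.trans ht₂.1, ht₂.2.trans hd⟩).trans <|
    mul_le_mul (mul_le_mul_of_nonneg_left (Real.rpow_le_rpow (abs_nonneg _)
      (abs_sub_le_of_le_of_le hs₂.1 hs₂.2 hs₁.1 hs₁.2) hρ₁) h.nonneg)
      (Real.rpow_le_rpow (abs_nonneg _) (abs_sub_le_of_le_of_le ht₂.1 ht₂.2 ht₁.1 ht₁.2) hρ₂)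
      (by positivity) (mul_nonneg h.nonneg (Real.rpow_nonneg (by linarith [hs₁.1, hs₁.2]) _))

end HolderBound

lemma exists_holderBound_of_nfin {γ₁ γ₂ ρ₁ ρ₂ β₁ β₂ : ℝ} {y x z : ℝ → ℝ → ℝ}
    (hy : NFin γ₁ γ₂ y) (hx : NFin ρ₁ ρ₂ x) (hz : NFin β₁ β₂ z) :
    ∃ C, HolderBound γ₁ γ₂ C y ∧ HolderBound ρ₁ ρ₂ C x ∧ HolderBound β₁ β₂ C z := by
  obtain ⟨Cy, hy⟩ : ∃ C, HolderBound γ₁ γ₂ C y := hy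
  obtain ⟨Cx, hx⟩ : ∃ C, HolderBound ρ₁ ρ₂ C x := hx
  obtain ⟨Cz, hz⟩ : ∃ C, HolderBound β₁ β₂ C z := hz
  exact ⟨max Cy (max Cx Cz), hy.mono_const (le_max_left _ _),
    hx.mono_const ((le_max_left _ _).trans (le_max_right _ _)),
    hz.mono_const ((le_max_right _ _).trans (le_max_right _ _))⟩

lemma dd_eq_d1_sub (f : ℝ → ℝ → ℝ) (s₁ s₂ t₁ t₂ : ℝ) :
    dd f s₁ s₂ t₁ t₂ = d1 f s₁ s₂ t₂ - d1 f s₁ s₂ t₁ := by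
  simp only [dd, d1]; ring

-- The summands of the sums (b), (a) and (c) of the theorem.
def youngGerm (y x z : ℝ → ℝ → ℝ) (a b c d : ℝ) : ℝ := y a c * d1 x a b c * d2 z a c d

def youngGermRight (y x z : ℝ → ℝ → ℝ) (a b c d : ℝ) : ℝ := y a c * d1 x a b c * d2 z b c d

def youngGermUpper (y x z : ℝ → ℝ → ℝ) (a b c d : ℝ) : ℝ := y a c * d2 z a c d * d1 x a b d

lemma youngGerm_swap (y x z : ℝ → ℝ → ℝ) (a b c d : ℝ) :
    youngGerm (Function.swap y) (Function.swap z) (Function.swap x) c d a b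
      = youngGerm y x z a b c d := by
  simp only [youngGerm, d1, d2, Function.swap]; ring

lemma youngGermRight_swap (y x z : ℝ → ℝ → ℝ) (a b c d : ℝ) :
    youngGermRight (Function.swap y) (Function.swap z) (Function.swap x) c d a b
      = youngGermUpper y x z a b c d :=
  rfl

section youngGerm

variable {μ₁ μ₂ ρ₁ β₂ C : ℝ} {y x z : ℝ → ℝ → ℝ}
  (hy : HolderBound μ₁ μ₂ C y) (hx : HolderBound ρ₁ μ₂ C x) (hz : HolderBound μ₁ β₂ C z)
  (hμ₁ : 0 ≤ μ₁) (hμ₂ : 0 ≤ μ₂) (hρ₁ : 0 ≤ ρ₁) (hβ₂ : 0 ≤ β₂)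
include hy hx hz hμ₁ hρ₁ hβ₂

lemma abs_defect_youngGerm_fst_le {a p b c d : ℝ} (ha : 0 ≤ a) (hap : a ≤ p) (hpb : p ≤ b)
    (hb : b ≤ 1) (hc : c ∈ Icc (0 : ℝ) 1) (hd : d ∈ Icc (0 : ℝ) 1) :
    |defect (fun a b => youngGerm y x z a b c d) a p b| ≤ 2 * C ^ 3 * (b - a) ^ (ρ₁ + μ₁) := by
  have hdefect : defect (fun a b => youngGerm y x z a b c d) a p b
      = -((d1 y a p c * d2 z p c d + y a c * dd z a p c d) * d1 x p b c) := by
    simp only [defect, youngGerm, d1, d2, dd]; ring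
  have haI : a ∈ Icc a b := ⟨le_rfl, hap.trans hpb⟩
  have hpI : p ∈ Icc a b := ⟨hap, hpb⟩
  have hbI : b ∈ Icc a b := ⟨hap.trans hpb, le_rfl⟩
  have hp : p ∈ Icc (0 : ℝ) 1 := ⟨ha.trans hap, hpb.trans hb⟩
  have hz₂ : |d2 z p c d| ≤ C := by
    simpa using hz.abs_d2_le hβ₂ le_rfl le_rfl hp hc hd
  have hz₁₂ : |dd z a p c d| ≤ C * (b - a) ^ μ₁ := by
    simpa using hz.abs_dd_le hμ₁ hβ₂ ha hb le_rfl le_rfl haI hpI hc hd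
  rw [hdefect, abs_neg]
  calc _ ≤ (C * (b - a) ^ μ₁ * C + C * (C * (b - a) ^ μ₁)) * (C * (b - a) ^ ρ₁) :=
        abs_mul_le_of_le ((abs_add_le _ _).trans (add_le_add
          (abs_mul_le_of_le (hy.abs_d1_le hμ₁ ha hb haI hpI hc) hz₂)
          (abs_mul_le_of_le (hy.abs_le ⟨ha, hap.trans (hpb.trans hb)⟩ hc) hz₁₂)))
          (hx.abs_d1_le hρ₁ ha hb hpI hbI hc)
    _ = 2 * C ^ 3 * (b - a) ^ (ρ₁ + μ₁) := by
        rw [Real.rpow_add_of_nonneg (by linarith) hρ₁ hμ₁]; ring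

include hμ₂ in
lemma abs_defect_youngGerm_mixed_le {a p b c q d : ℝ} (ha : 0 ≤ a) (hap : a ≤ p) (hpb : p ≤ b)
    (hb : b ≤ 1) (hc : 0 ≤ c) (hcq : c ≤ q) (hqd : q ≤ d) (hd : d ≤ 1) :
    |defect (fun a b => defect (youngGerm y x z a b) c q d) a p b|
      ≤ 4 * C ^ 3 * (b - a) ^ (ρ₁ + μ₁) * (d - c) ^ (β₂ + μ₂) := by
  have hdefect : defect (fun a b => defect (youngGerm y x z a b) c q d) a p b
      = dd x p b c q * d1 y a p q * d2 z p q d + d1 x p b c * dd y a p c q * d2 z p q d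
        + d1 x p b q * d2 y a c q * dd z a p q d + y a c * dd x p b c q * dd z a p q d := by
    simp only [defect, youngGerm, d1, d2, dd]; ring
  have haI : a ∈ Icc a b := ⟨le_rfl, hap.trans hpb⟩
  have hpI : p ∈ Icc a b := ⟨hap, hpb⟩
  have hbI : b ∈ Icc a b := ⟨hap.trans hpb, le_rfl⟩
  have hcI : c ∈ Icc c d := ⟨le_rfl, hcq.trans hqd⟩
  have hqI : q ∈ Icc c d := ⟨hcq, hqd⟩
  have hdI : d ∈ Icc c d := ⟨hcq.trans hqd, le_rfl⟩
  have hp : p ∈ Icc (0 : ℝ) 1 := ⟨ha.trans hap, hpb.trans hb⟩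
  have hq : q ∈ Icc (0 : ℝ) 1 := ⟨hc.trans hcq, hqd.trans hd⟩
  set P := C ^ 3 * (b - a) ^ ρ₁ * (b - a) ^ μ₁ * (d - c) ^ μ₂ * (d - c) ^ β₂
  have h₁ := abs_mul_mul_le_of_le (hx.abs_dd_le hρ₁ hμ₂ ha hb hc hd hpI hbI hcI hqI)
    (hy.abs_d1_le hμ₁ ha hb haI hpI hq) (hz.abs_d2_le hβ₂ hc hd hp hqI hdI)
  have h₂ := abs_mul_mul_le_of_le (hx.abs_d1_le hρ₁ ha hb hpI hbI ⟨hc, hcq.trans (hqd.trans hd)⟩)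
    (hy.abs_dd_le hμ₁ hμ₂ ha hb hc hd haI hpI hcI hqI) (hz.abs_d2_le hβ₂ hc hd hp hqI hdI)
  have h₃ := abs_mul_mul_le_of_le (hx.abs_d1_le hρ₁ ha hb hpI hbI hq)
    (hy.abs_d2_le hμ₂ hc hd ⟨ha, hap.trans (hpb.trans hb)⟩ hcI hqI)
    (hz.abs_dd_le hμ₁ hβ₂ ha hb hc hd haI hpI hqI hdI)
  have h₄ := abs_mul_mul_le_of_le (hy.abs_le ⟨ha, hap.trans (hpb.trans hb)⟩
    ⟨hc, hcq.trans (hqd.trans hd)⟩) (hx.abs_dd_le hρ₁ hμ₂ ha hb hc hd hpI hbI hcI hqI)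
    (hz.abs_dd_le hμ₁ hβ₂ ha hb hc hd haI hpI hqI hdI)
  rw [hdefect, Real.rpow_add_of_nonneg (by linarith) hρ₁ hμ₁,
    Real.rpow_add_of_nonneg (by linarith) hβ₂ hμ₂]
  calc _ ≤ P + P + P + P := by
        refine (abs_add_le _ _).trans (add_le_add ((abs_add_three _ _ _).trans ?_) ?_)
        · exact add_le_add (add_le_add (h₁.trans_eq (by ring)) (h₂.trans_eq (by ring)))
            (h₃.trans_eq (by ring))
        · exact h₄.trans_eq (by ring)
    _ = _ := by ring

include hμ₂ in
theorem sewingBounds_youngGerm :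
    SewingBounds (ρ₁ + μ₁) (β₂ + μ₂) (4 * C ^ 3) 0 1 0 1 (youngGerm y x z) where
  fst a p b c d ha hap hpb hb hc hcd hd := by
    have := abs_defect_youngGerm_fst_le hy hx hz hμ₁ hρ₁ hβ₂ ha hap hpb hb
      ⟨hc, hcd.trans hd⟩ ⟨hc.trans hcd, hd⟩
    linarith [mul_nonneg (pow_nonneg hy.nonneg 3)
      (Real.rpow_nonneg (sub_nonneg.2 (hap.trans hpb)) (ρ₁ + μ₁))]
  snd a b c q d ha hab hb hc hcq hqd hd := by
    have := abs_defect_youngGerm_fst_le hy.swap hz.swap hx.swap hμ₂ hβ₂ hρ₁ hc hcq hqd hd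
      ⟨ha, hab.trans hb⟩ ⟨ha.trans hab, hb⟩
    simp only [youngGerm_swap] at this
    linarith [mul_nonneg (pow_nonneg hy.nonneg 3)
      (Real.rpow_nonneg (sub_nonneg.2 (hcq.trans hqd)) (β₂ + μ₂))]
  mixed a p b c q d ha hap hpb hb hc hcq hqd hd :=
    abs_defect_youngGerm_mixed_le hy hx hz hμ₁ hμ₂ hρ₁ hβ₂ ha hap hpb hb hc hcq hqd hd

end youngGerm

/-! ### The sums (a) and (c) -/

section Rows

variable {γ₁ μ₂ ρ₁ β₁ β₂ C : ℝ} {y x z : ℝ → ℝ → ℝ}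
  (hy : HolderBound γ₁ μ₂ C y) (hx : HolderBound ρ₁ μ₂ C x) (hμ₂ : 0 ≤ μ₂) (hρ₁ : 0 ≤ ρ₁)
include hy hx hμ₂ hρ₁

lemma abs_mul_d1_sub_mul_d1_le {a b c q : ℝ} (ha : 0 ≤ a) (hab : a ≤ b) (hb : b ≤ 1)
    (hc : 0 ≤ c) (hcq : c ≤ q) (hq : q ≤ 1) :
    |y a q * d1 x a b q - y a c * d1 x a b c| ≤ 2 * C ^ 2 * (b - a) ^ ρ₁ * (q - c) ^ μ₂ := by
  have haI : a ∈ Icc a b := ⟨le_rfl, hab⟩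
  have hbI : b ∈ Icc a b := ⟨hab, le_rfl⟩
  have hcI : c ∈ Icc c q := ⟨le_rfl, hcq⟩
  have hqI : q ∈ Icc c q := ⟨hcq, le_rfl⟩
  have hsplit : y a q * d1 x a b q - y a c * d1 x a b c
      = d2 y a c q * d1 x a b q + y a c * dd x a b c q := by
    simp only [d1, d2, dd]; ring
  rw [hsplit]
  calc _ ≤ C * (q - c) ^ μ₂ * (C * (b - a) ^ ρ₁) + C * (C * (b - a) ^ ρ₁ * (q - c) ^ μ₂) :=
        (abs_add_le _ _).trans (add_le_add
          (abs_mul_le_of_le (hy.abs_d2_le hμ₂ hc hq ⟨ha, hab.trans hb⟩ hcI hqI)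
            (hx.abs_d1_le hρ₁ ha hb haI hbI ⟨hc.trans hcq, hq⟩))
          (abs_mul_le_of_le (hy.abs_le ⟨ha, hab.trans hb⟩ ⟨hc, hcq.trans hq⟩)
            (hx.abs_dd_le hρ₁ hμ₂ ha hb hc hq haI hbI hcI hqI)))
    _ = _ := by ring

variable (hz : HolderBound β₁ β₂ C z) (hβ₁ : 0 ≤ β₁) (hβ₂ : 0 ≤ β₂)
include hz hβ₁ hβ₂

/-- Along a row the difference of the germs is a Young sum `Σ g (h(τⱼ₊₁) - h(τⱼ))` with
`g = y(a, ·) δ₁x(a, b; ·)` and `h = δ₁z(a, b; ·)`. -/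
lemma abs_gridSum_youngGermRight_sub_youngGerm_le (hβμ : 1 < β₂ + μ₂) {a b t t' : ℝ}
    (ha : 0 ≤ a) (hab : a ≤ b) (hb : b ≤ 1) (ht : 0 ≤ t) (ht' : t' ≤ 1) {n : ℕ} {τ : ℕ → ℝ}
    (hτ : IsGrid t t' n τ) :
    |gridSum n τ (fun c d => youngGermRight y x z a b c d - youngGerm y x z a b c d)|
      ≤ C ^ 3 * (1 + 2 * youngConst (μ₂ + β₂) * (t' - t) ^ (μ₂ + β₂)) * (b - a) ^ (ρ₁ + β₁) := by
  have hC := hy.nonneg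
  have htt' := hτ.le
  have haI : a ∈ Icc a b := ⟨le_rfl, hab⟩
  have hbI : b ∈ Icc a b := ⟨hab, le_rfl⟩
  have htI : t ∈ Icc (0 : ℝ) 1 := ⟨ht, htt'.trans ht'⟩
  have hprod : (fun c d => youngGermRight y x z a b c d - youngGerm y x z a b c d)
      = fun c d => y a c * d1 x a b c * (d1 z a b d - d1 z a b c) := by
    funext c d; simp only [youngGermRight, youngGerm, d1, d2]; ring
  have hyoung := abs_gridSum_mul_sub_le (by linarith) hμ₂ hβ₂ (by positivity)
    (mul_nonneg hC (Real.rpow_nonneg (sub_nonneg.2 hab) β₁))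
    (fun c q hc hcq hq => abs_mul_d1_sub_mul_d1_le hy hx hμ₂ hρ₁ ha hab hb (ht.trans hc) hcq
      (hq.trans ht'))
    (fun q d hq hqd hd => dd_eq_d1_sub z a b q d ▸ hz.abs_dd_le hβ₁ hβ₂ ha hb (ht.trans hq)
      (hd.trans ht') haI hbI ⟨le_rfl, hqd⟩ ⟨hqd, le_rfl⟩) hτ
  have hend : |y a t * d1 x a b t * (d1 z a b t' - d1 z a b t)|
      ≤ C * (C * (b - a) ^ ρ₁) * (C * (b - a) ^ β₁) := by
    refine abs_mul_mul_le_of_le (hy.abs_le ⟨ha, hab.trans hb⟩ htI)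
      (hx.abs_d1_le hρ₁ ha hb haI hbI htI) ?_
    simpa [dd_eq_d1_sub] using hz.abs_dd_le hβ₁ hβ₂ ha hb le_rfl le_rfl haI hbI htI
      ⟨ht.trans htt', ht'⟩
  rw [hprod, Real.rpow_add_of_nonneg (sub_nonneg.2 hab) hρ₁ hβ₁]
  calc _ ≤ |y a t * d1 x a b t * (d1 z a b t' - d1 z a b t)|
        + |gridSum n τ (fun c d => y a c * d1 x a b c * (d1 z a b d - d1 z a b c))
          - y a t * d1 x a b t * (d1 z a b t' - d1 z a b t)| := by
        simpa using abs_add_le (y a t * d1 x a b t * (d1 z a b t' - d1 z a b t))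
          (gridSum n τ (fun c d => y a c * d1 x a b c * (d1 z a b d - d1 z a b c))
            - y a t * d1 x a b t * (d1 z a b t' - d1 z a b t))
    _ ≤ _ := add_le_add hend hyoung
    _ = _ := by ring

theorem exists_rconvRate_youngGermRight_sub_youngGerm (hρβ : 1 < ρ₁ + β₁)
    (hβμ : 1 < β₂ + μ₂) {s s' t t' : ℝ} (hs : 0 ≤ s) (hs' : s' ≤ 1) (ht : 0 ≤ t) (htt' : t ≤ t')
    (ht' : t' ≤ 1) :
    ∃ B, RConvRate s s' t t'
      (fun a b c d => youngGermRight y x z a b c d - youngGerm y x z a b c d) 0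
      (fun η => B * η ^ (ρ₁ + β₁ - 1)) := by
  set M := C ^ 3 * (1 + 2 * youngConst (μ₂ + β₂) * (t' - t) ^ (μ₂ + β₂))
  have hM : 0 ≤ M := by
    have := hy.nonneg; have := youngConst_nonneg (μ₂ + β₂)
    have := Real.rpow_nonneg (sub_nonneg.2 htt') (μ₂ + β₂)
    positivity
  refine ⟨M * (s' - s), fun η _ m n σ τ hσ hτ hmσ _ => ?_⟩
  rw [sub_zero]
  exact (hσ.abs_gridSum_le hmσ hρβ.le hM fun a b ha hab hb =>
    abs_gridSum_youngGermRight_sub_youngGerm_le hy hx hμ₂ hρ₁ hz hβ₁ hβ₂ hβμ (hs.trans ha) hab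
      (hb.trans hs') ht ht' hτ).trans_eq (by ring)

end Rows

theorem exists_rconvRate_youngGermUpper_sub_youngGerm {μ₁ γ₂ ρ₁ ρ₂ β₂ C s s' t t' : ℝ}
    {y x z : ℝ → ℝ → ℝ} (hy : HolderBound μ₁ γ₂ C y) (hx : HolderBound ρ₁ ρ₂ C x)
    (hz : HolderBound μ₁ β₂ C z) (hμ₁ : 0 ≤ μ₁) (hρ₁ : 0 ≤ ρ₁) (hρ₂ : 0 ≤ ρ₂) (hβ₂ : 0 ≤ β₂)
    (hρβ : 1 < ρ₂ + β₂) (hρμ : 1 < ρ₁ + μ₁) (hs : 0 ≤ s) (hss' : s ≤ s') (hs' : s' ≤ 1)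
    (ht : 0 ≤ t) (ht' : t' ≤ 1) :
    ∃ B, RConvRate s s' t t'
      (fun a b c d => youngGermUpper y x z a b c d - youngGerm y x z a b c d) 0
      (fun η => B * η ^ (β₂ + ρ₂ - 1)) := by
  obtain ⟨B, hB⟩ := exists_rconvRate_youngGermRight_sub_youngGerm hy.swap hz.swap hμ₁ hβ₂ hx.swap
    hρ₂ hρ₁ (by linarith) hρμ ht ht' hs hss' hs'
  refine ⟨B, RConvRate.of_swap ?_⟩
  simpa only [youngGerm_swap, youngGermRight_swap] using hB

theorem stmt2_general
    (γ₁ γ₂ ρ₁ ρ₂ β₁ β₂ : ℝ)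
    (hγ₁ : γ₁ ∈ Set.Ioc (0:ℝ) 1) (hγ₂ : γ₂ ∈ Set.Ioc (0:ℝ) 1)
    (hρ₁ : ρ₁ ∈ Set.Ioc (0:ℝ) 1) (hρ₂ : ρ₂ ∈ Set.Ioc (0:ℝ) 1)
    (hβ₁ : β₁ ∈ Set.Ioc (0:ℝ) 1) (hβ₂ : β₂ ∈ Set.Ioc (0:ℝ) 1)
    (hγρ₁ : 1 < γ₁ + ρ₁)
    (hβγ₂ : 1 < β₂ + γ₂)
    (hβρ₁ : 1 < β₁ + ρ₁) (hβρ₂ : 1 < β₂ + ρ₂)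
    (y x z : ℝ → ℝ → ℝ)
    (hyN : NFin γ₁ γ₂ y) (hxN : NFin ρ₁ ρ₂ x) (hzN : NFin β₁ β₂ z)
    (s s' t t' : ℝ) (hs : 0 ≤ s) (hss' : s ≤ s') (hs' : s' ≤ 1)
    (ht : 0 ≤ t) (htt' : t ≤ t') (ht' : t' ≤ 1) :
    ∃ L : ℝ,
      RConv s s' t t' (fun a b c d => y a c * d1 x a b c * d2 z b c d) L ∧
      RConv s s' t t' (fun a b c d => y a c * d1 x a b c * d2 z a c d) L ∧
      RConv s s' t t' (fun a b c d => y a c * d2 z a c d * d1 x a b d) L := by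
  obtain ⟨C, hy, hx, hz⟩ := exists_holderBound_of_nfin hyN hxN hzN
  set μ₁ := min γ₁ β₁
  set μ₂ := min γ₂ ρ₂
  have hμ₁ : 0 ≤ μ₁ := le_min hγ₁.1.le hβ₁.1.le
  have hμ₂ : 0 ≤ μ₂ := le_min hγ₂.1.le hρ₂.1.le
  have hθ₁ : 1 < ρ₁ + μ₁ := min_add_add_left ρ₁ γ₁ β₁ ▸ lt_min (by linarith) (by linarith)
  have hθ₂ : 1 < β₂ + μ₂ := min_add_add_left β₂ γ₂ ρ₂ ▸ lt_min (by linarith) (by linarith)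
  have hx' := hx.weaken_exponent ⟨hρ₁.1.le, le_rfl⟩ ⟨hμ₂, min_le_right _ _⟩
  have hz' := hz.weaken_exponent ⟨hμ₁, min_le_right _ _⟩ ⟨hβ₂.1.le, le_rfl⟩
  obtain ⟨L, r, hr, hL⟩ := ((sewingBounds_youngGerm
    (hy.weaken_exponent ⟨hμ₁, min_le_left _ _⟩ ⟨hμ₂, min_le_left _ _⟩) hx' hz' hμ₁ hμ₂ hρ₁.1.le
    hβ₂.1.le).mono hs hs' ht ht').exists_rconvRate hθ₁ hθ₂ (by have := hx.nonneg; positivity)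
    hss' htt'
  obtain ⟨Ba, hBa⟩ := exists_rconvRate_youngGermRight_sub_youngGerm
    (hy.weaken_exponent ⟨hγ₁.1.le, le_rfl⟩ ⟨hμ₂, min_le_left _ _⟩) hx' hμ₂ hρ₁.1.le hz hβ₁.1.le
    hβ₂.1.le (by linarith) hθ₂ hs hs' ht htt' ht'
  obtain ⟨Bc, hBc⟩ := exists_rconvRate_youngGermUpper_sub_youngGerm
    (hy.weaken_exponent ⟨hμ₁, min_le_left _ _⟩ ⟨hγ₂.1.le, le_rfl⟩) hx hz' hμ₁ hρ₁.1.le hρ₂.1.le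
    hβ₂.1.le (by linarith) hθ₁ hs hss' hs' ht ht'
  exact ⟨L, hL.rconv_of_sub hr hBa (tendsto_const_mul_rpow_nhdsGT_zero Ba (by linarith)),
    hL.rconv hr, hL.rconv_of_sub hr hBc (tendsto_const_mul_rpow_nhdsGT_zero Bc (by linarith))⟩

/-- **Mixed two-dimensional Young integral `∬ y d₁x d₂z`.**
Under the stated Hölder conditions, the three families of Riemann sums (a), (b), (c)
converge to a common limit on every rectangle of `[0,1]²`. -/
theorem stmt2
    (γ₁ γ₂ ρ₁ ρ₂ β₁ β₂ : ℝ)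
    (hγ₁ : γ₁ ∈ Set.Ioc (0:ℝ) 1) (hγ₂ : γ₂ ∈ Set.Ioc (0:ℝ) 1)
    (hρ₁ : ρ₁ ∈ Set.Ioc (0:ℝ) 1) (hρ₂ : ρ₂ ∈ Set.Ioc (0:ℝ) 1)
    (hβ₁ : β₁ ∈ Set.Ioc (0:ℝ) 1) (hβ₂ : β₂ ∈ Set.Ioc (0:ℝ) 1)
    (hγρ₁ : 1 < γ₁ + ρ₁) (hγρ₂ : 1 < γ₂ + ρ₂)
    (hβγ₁ : 1 < β₁ + γ₁) (hβγ₂ : 1 < β₂ + γ₂)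
    (hβρ₁ : 1 < β₁ + ρ₁) (hβρ₂ : 1 < β₂ + ρ₂)
    (y x z : ℝ → ℝ → ℝ)
    (hyc : ContinuousOn (fun q : ℝ × ℝ => y q.1 q.2) (Icc 0 1 ×ˢ Icc 0 1))
    (hxc : ContinuousOn (fun q : ℝ × ℝ => x q.1 q.2) (Icc 0 1 ×ˢ Icc 0 1))
    (hzc : ContinuousOn (fun q : ℝ × ℝ => z q.1 q.2) (Icc 0 1 ×ˢ Icc 0 1))
    (hyN : NFin γ₁ γ₂ y) (hxN : NFin ρ₁ ρ₂ x) (hzN : NFin β₁ β₂ z)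
    (s s' t t' : ℝ) (hs : 0 ≤ s) (hss' : s ≤ s') (hs' : s' ≤ 1)
    (ht : 0 ≤ t) (htt' : t ≤ t') (ht' : t' ≤ 1) :
    ∃ L : ℝ,
      RConv s s' t t' (fun a b c d => y a c * d1 x a b c * d2 z b c d) L ∧
      RConv s s' t t' (fun a b c d => y a c * d1 x a b c * d2 z a c d) L ∧
      RConv s s' t t' (fun a b c d => y a c * d2 z a c d * d1 x a b d) L :=
  stmt2_general γ₁ γ₂ ρ₁ ρ₂ β₁ β₂ hγ₁ hγ₂ hρ₁ hρ₂ hβ₁ hβ₂ hγρ₁ hβγ₂ hβρ₁ hβρ₂ y x z hyN hxN hzN s s'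
    t t' hs hss' hs' ht htt' ht'
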